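/- arXiv:1412.4912 — 3 statements merged into one kernel-verified Lean document; each statement's English description precedes it below -/
import Mathlib

section
/- In the oscillation model with parameters (f, ω, σ_η², σ_ε²) the autocovariance function Γ(ℓ) := E[Y_ℓ Y_0] − (E[Y_0])² satisfies, for every ℓ ∈ ℕ₊, Γ(ℓ) = 2 ∑_{k=1}^{∞} |c_k(f)|² cos(kℓω) e^{−ℓ k² σ_η²/2}; equivalently, (1/(2π)) ∫_0^{2π} ∫_ℝ f(x) f(x+y) g_ℓ(y) dy dx − c_0(f)² = 2 ∑_{k=1}^{∞} |c_k(f)|² cos(kℓω) e^{−ℓ k² σ_η²/2}, where g_ℓ is the density of N(ℓω, ℓσ_η²). Moreover Γ(0) = σ_ε² + 2 ∑_{k=1}^{∞} |c_k(f)|². -/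
open MeasureTheory ProbabilityTheory Real Set

noncomputable section

/-- The `k`-th Fourier coefficient `c_k(f) = (1/(2π)) ∫_{-π}^{π} f(x) e^{-ikx} dx`. -/
def fc (f : ℝ → ℝ) (k : ℤ) : ℂ :=
  (1 / (2 * (π : ℂ))) *
    ∫ x in (-π : ℝ)..π, (f x : ℂ) * Complex.exp (-Complex.I * (k : ℂ) * (x : ℂ))

/-- The class `F` of oscillation patterns: 2π-periodic functions with square-summable
Fourier coefficients which represent the function. -/
def IsOscPattern (f : ℝ → ℝ) : Prop :=
  (∀ x : ℝ, f (x + 2 * π) = f x) ∧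
  Summable (fun k : ℤ => ‖fc f k‖ ^ 2) ∧
  ∀ x : ℝ, (f x : ℂ) = ∑' k : ℤ, fc f k * Complex.exp (Complex.I * (k : ℂ) * (x : ℂ))

/-!
Write `eₖ(x) = e^{ikx}` and `cₖ = fc f k`. A series that converges unconditionally in `ℂ`
converges absolutely, so `(cₖ) ∈ ℓ¹`, `f` is continuous, and against any `(dₖ) ∈ ℓ¹` one may
integrate termwise: `(1/2π) ∫_{-π}^{π} f · ∑ dₖ eₖ = ∑ dₖ conj cₖ`, using `c₋ₖ = conj cₖ` for
real `f`. Averaging `f(x + ·)` against a probability law `μ` multiplies `cₖ` by `μ̂(k)`, so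
`(1/2π) ∫ f(x) ∫ f(x + y) dμ(y) dx = ∑ₖ |cₖ|² Re μ̂(k)`: the `k = 0` term is `c₀²` and the terms
at `±k` agree. For `μ = N(ℓω, ℓσ_η²)`, `Re μ̂(k) = cos(kℓω) e^{-ℓk²σ_η²/2}`; lag `0` is the case
`μ = δ₀`, i.e. Parseval.
-/

open scoped Complex ComplexConjugate

lemma norm_mul_cexp_I_mul (a : ℂ) (k : ℤ) (x : ℝ) :
    ‖a * cexp (Complex.I * (k : ℂ) * (x : ℂ))‖ = ‖a‖ := by
  rw [norm_mul, show Complex.I * (k : ℂ) * (x : ℂ) = ((k * x : ℝ) : ℂ) * Complex.I by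
    push_cast; ring, Complex.norm_exp_ofReal_mul_I, mul_one]

lemma continuous_tsum_mul_cexp {c : ℤ → ℂ} (hc : Summable fun k => ‖c k‖) :
    Continuous fun x : ℝ => ∑' k : ℤ, c k * cexp (Complex.I * (k : ℂ) * (x : ℂ)) :=
  continuous_tsum (fun k => by fun_prop) hc fun k x => (norm_mul_cexp_I_mul _ _ _).le

lemma hasSum_integral_mul_tsum_mul_cexp {μ : Measure ℝ} {g : ℝ → ℂ} (hg : Integrable g μ)
    {d : ℤ → ℂ} (hd : Summable fun k => ‖d k‖) :
    HasSum (fun k : ℤ => d k * ∫ x, g x * cexp (Complex.I * (k : ℂ) * (x : ℂ)) ∂μ)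
      (∫ x, g x * ∑' k : ℤ, d k * cexp (Complex.I * (k : ℂ) * (x : ℂ)) ∂μ) := by
  have hnorm (k : ℤ) (x : ℝ) :
      ‖g x * (d k * cexp (Complex.I * (k : ℂ) * (x : ℂ)))‖ = ‖d k‖ * ‖g x‖ := by
    rw [norm_mul, norm_mul_cexp_I_mul, mul_comm]
  have hint (k : ℤ) : Integrable (fun x => g x * (d k * cexp (Complex.I * (k : ℂ) * (x : ℂ)))) μ :=
    hg.mul_bdd (by fun_prop) (ae_of_all _ fun x => (norm_mul_cexp_I_mul _ _ _).le)
  have hsum : Summable fun k : ℤ =>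
      ∫ x, ‖g x * (d k * cexp (Complex.I * (k : ℂ) * (x : ℂ)))‖ ∂μ := by
    simpa only [hnorm, integral_const_mul] using hd.mul_right (∫ x, ‖g x‖ ∂μ)
  simpa only [← integral_const_mul, tsum_mul_left, mul_left_comm (d _)] using
    hasSum_integral_of_summable_integral_norm hint hsum

lemma tsum_int_eq_zero_add_two_nsmul_tsum_nat_succ {G : Type*} [AddCommGroup G] [UniformSpace G]
    [IsUniformAddGroup G] [CompleteSpace G] [T2Space G] {u : ℤ → G} (heven : u.Even)
    (hu : Summable u) : ∑' n, u n = u 0 + 2 • ∑' k : ℕ, u (k + 1) := by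
  rw [tsum_int_eq_zero_add_two_mul_tsum_pnat heven hu,
    tsum_pnat_eq_tsum_succ (f := fun n : ℕ => u n)]
  push_cast
  rfl

lemma re_charFun_gaussianReal (m : ℝ) (v : NNReal) (t : ℝ) :
    (charFun (gaussianReal m v) t).re = Real.exp (-(v * t ^ 2 / 2)) * Real.cos (t * m) := by
  rw [charFun_gaussianReal, Complex.exp_re, ← Complex.ofReal_pow]
  simp [sq]

lemma fc_neg (f : ℝ → ℝ) (k : ℤ) : fc f (-k) = conj (fc f k) := by
  rw [fc, fc, map_mul, ← intervalIntegral.intervalIntegral_conj]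
  simp only [map_div₀, map_one, map_mul, map_ofNat, Complex.conj_ofReal, ← Complex.exp_conj,
    map_neg, Complex.conj_I, map_intCast, Int.cast_neg]
  congr 2
  ring_nf

lemma integral_mul_cexp_eq_two_pi_mul_conj_fc (f : ℝ → ℝ) (k : ℤ) :
    ∫ x in -π..π, (f x : ℂ) * cexp (Complex.I * (k : ℂ) * (x : ℂ)) = 2 * π * conj (fc f k) := by
  rw [← fc_neg, fc, ← mul_assoc, mul_one_div_cancel (by exact_mod_cast two_pi_pos.ne'), one_mul]
  congr 1 with x
  push_cast
  ring_nf

lemma fc_zero (f : ℝ → ℝ) : fc f 0 = ((1 / (2 * π) * ∫ x in -π..π, f x : ℝ) : ℂ) := by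
  simp [fc, intervalIntegral.integral_ofReal]

lemma norm_fc_neg (f : ℝ → ℝ) (k : ℤ) : ‖fc f (-k)‖ = ‖fc f k‖ := by
  rw [fc_neg, Complex.norm_conj]

lemma norm_fc_zero_sq (f : ℝ → ℝ) : ‖fc f 0‖ ^ 2 = (1 / (2 * π) * ∫ x in -π..π, f x) ^ 2 := by
  rw [fc_zero, Complex.norm_real, Real.norm_eq_abs, sq_abs]

namespace IsOscPattern

variable {f : ℝ → ℝ}

lemma summable_norm_fc (hf : IsOscPattern f) : Summable fun k => ‖fc f k‖ := by
  by_contra h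
  -- otherwise every series in the representation of `f` has the junk sum `0`
  have hf0 (x : ℝ) : f x = 0 := by
    have hx : ¬Summable fun k : ℤ => fc f k * cexp (Complex.I * (k : ℂ) * (x : ℂ)) := fun hs =>
      h (by simpa only [norm_mul_cexp_I_mul] using summable_norm_iff.mpr hs)
    exact_mod_cast (hf.2.2 x).trans (tsum_eq_zero_of_not_summable hx)
  exact h (by simp [fc, hf0])

lemma continuous (hf : IsOscPattern f) : Continuous f := by
  have h : f = fun x : ℝ => (∑' k : ℤ, fc f k * cexp (Complex.I * (k : ℂ) * (x : ℂ))).re :=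
    funext fun x => by rw [← hf.2.2, Complex.ofReal_re]
  rw [h]
  exact Complex.continuous_re.comp (continuous_tsum_mul_cexp hf.summable_norm_fc)

lemma hasSum_mul_conj_fc (hf : IsOscPattern f) {d : ℤ → ℂ} (hd : Summable fun k => ‖d k‖) :
    HasSum (fun k => d k * conj (fc f k)) (1 / (2 * π) *
      ∫ x in -π..π, (f x : ℂ) * ∑' k : ℤ, d k * cexp (Complex.I * (k : ℂ) * (x : ℂ))) := by
  have h := hasSum_integral_mul_tsum_mul_cexp (μ := volume.restrict (Ioc (-π) π))
    ((Complex.continuous_ofReal.comp hf.continuous).integrableOn_Ioc) hd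
  simp only [← intervalIntegral.integral_of_le (neg_le_self pi_pos.le), Function.comp_apply,
    integral_mul_cexp_eq_two_pi_mul_conj_fc] at h
  refine (h.mul_left (1 / (2 * (π : ℂ)))).congr_fun fun k => ?_
  field_simp

lemma integral_comp_add (hf : IsOscPattern f) (μ : Measure ℝ) [IsFiniteMeasure μ] (x : ℝ) :
    ∫ y, (f (x + y) : ℂ) ∂μ =
      ∑' k : ℤ, fc f k * charFun μ k * cexp (Complex.I * (k : ℂ) * (x : ℂ)) := by
  have hd : Summable fun k : ℤ => ‖fc f k * cexp (Complex.I * (k : ℂ) * (x : ℂ))‖ := by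
    simpa only [norm_mul_cexp_I_mul] using hf.summable_norm_fc
  have h := hasSum_integral_mul_tsum_mul_cexp (integrable_const (1 : ℂ) (μ := μ)) hd
  have hchar (k : ℤ) : ∫ y, (1 : ℂ) * cexp (Complex.I * (k : ℂ) * (y : ℂ)) ∂μ = charFun μ k := by
    simp only [one_mul, charFun_apply_real, Complex.ofReal_intCast, mul_comm Complex.I,
      mul_right_comm _ Complex.I]
  have hshift (y : ℝ) : (f (x + y) : ℂ) = 1 * ∑' k : ℤ, fc f k *
      cexp (Complex.I * (k : ℂ) * (x : ℂ)) * cexp (Complex.I * (k : ℂ) * (y : ℂ)) := by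
    simp only [hf.2.2, one_mul, mul_assoc, ← Complex.exp_add, Complex.ofReal_add, mul_add]
  simp only [hchar] at h
  calc ∫ y, (f (x + y) : ℂ) ∂μ
      = ∫ y, 1 * ∑' k : ℤ, fc f k * cexp (Complex.I * (k : ℂ) * (x : ℂ)) *
          cexp (Complex.I * (k : ℂ) * (y : ℂ)) ∂μ := integral_congr_ae (ae_of_all _ hshift)
    _ = _ := h.tsum_eq.symm
    _ = _ := tsum_congr fun k => mul_right_comm _ _ _

lemma hasSum_norm_fc_sq_mul_re_charFun (hf : IsOscPattern f) (μ : Measure ℝ) [IsFiniteMeasure μ] :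
    HasSum (fun k => ‖fc f k‖ ^ 2 * (charFun μ k).re)
      (1 / (2 * π) * ∫ x in -π..π, f x * ∫ y, f (x + y) ∂μ) := by
  have hd : Summable fun k => ‖fc f k * charFun μ k‖ := by
    refine (hf.summable_norm_fc.mul_right (μ.real univ)).of_nonneg_of_le (fun _ => norm_nonneg _)
      fun k => ?_
    rw [norm_mul]
    exact mul_le_mul_of_nonneg_left (norm_charFun_le _) (norm_nonneg _)
  have hval : 1 / (2 * (π : ℂ)) * ∫ x in -π..π, (f x : ℂ) *
      ∑' k : ℤ, fc f k * charFun μ k * cexp (Complex.I * (k : ℂ) * (x : ℂ)) =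
      ((1 / (2 * π) * ∫ x in -π..π, f x * ∫ y, f (x + y) ∂μ : ℝ) : ℂ) := by
    simp only [← hf.integral_comp_add, integral_complex_ofReal, ← Complex.ofReal_mul,
      intervalIntegral.integral_ofReal]
    norm_cast
  have h := Complex.hasSum_re (hf.hasSum_mul_conj_fc hd)
  rw [hval, Complex.ofReal_re] at h
  refine h.congr_fun fun k => ?_
  rw [mul_right_comm, Complex.mul_conj', ← Complex.ofReal_pow, Complex.re_ofReal_mul]

lemma autocovariance_eq (hf : IsOscPattern f) (μ : Measure ℝ) [IsProbabilityMeasure μ] :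
    1 / (2 * π) * (∫ x in -π..π, f x * ∫ y, f (x + y) ∂μ) - (1 / (2 * π) * ∫ x in -π..π, f x) ^ 2 =
      2 * ∑' k : ℕ, ‖fc f ((k : ℤ) + 1)‖ ^ 2 * (charFun μ ((k : ℝ) + 1)).re := by
  have h := hf.hasSum_norm_fc_sq_mul_re_charFun μ
  have heven : (fun k : ℤ => ‖fc f k‖ ^ 2 * (charFun μ k).re).Even := fun k => by
    simp only [Int.cast_neg, norm_fc_neg, charFun_neg, Complex.conj_re]
  rw [← h.tsum_eq, tsum_int_eq_zero_add_two_nsmul_tsum_nat_succ heven h.summable, norm_fc_zero_sq]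
  simp [nsmul_eq_mul]

end IsOscPattern

theorem autocovariance_formula_general
    (f : ℝ → ℝ) (hf : IsOscPattern f) (ω σε ση : ℝ) (hση : 0 < ση) :
    (∀ ℓ : ℕ, 1 ≤ ℓ →
      (1 / (2 * π)) *
          (∫ x in (0 : ℝ)..(2 * π),
            ∫ y : ℝ, f x * f (x + y) *
              gaussianPDFReal ((ℓ : ℝ) * ω) ((ℓ : NNReal) * (ση ^ 2).toNNReal) y) -
        ((1 / (2 * π)) * ∫ x in (-π : ℝ)..π, f x) ^ 2 =
      2 * ∑' k : ℕ, ‖fc f ((k : ℤ) + 1)‖ ^ 2 *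
        Real.cos (((k : ℝ) + 1) * (ℓ : ℝ) * ω) *
        Real.exp (-(ℓ : ℝ) * ((k : ℝ) + 1) ^ 2 * ση ^ 2 / 2)) ∧
    (σε ^ 2 + (1 / (2 * π)) * (∫ x in (-π : ℝ)..π, f x ^ 2) -
        ((1 / (2 * π)) * ∫ x in (-π : ℝ)..π, f x) ^ 2 =
      σε ^ 2 + 2 * ∑' k : ℕ, ‖fc f ((k : ℤ) + 1)‖ ^ 2) := by
  refine ⟨fun ℓ hℓ => ?_, ?_⟩
  · set γ := gaussianReal ((ℓ : ℝ) * ω) ((ℓ : NNReal) * (ση ^ 2).toNNReal)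
    have hv : (ℓ : NNReal) * (ση ^ 2).toNNReal ≠ 0 := by positivity
    have hinner (x : ℝ) : ∫ y : ℝ, f x * f (x + y) *
        gaussianPDFReal ((ℓ : ℝ) * ω) ((ℓ : NNReal) * (ση ^ 2).toNNReal) y =
        f x * ∫ y, f (x + y) ∂γ := by
      rw [integral_gaussianReal_eq_integral_smul hv, ← integral_const_mul]
      congr 1 with y
      rw [smul_eq_mul]
      ring
    have hper : Function.Periodic (fun x => f x * ∫ y, f (x + y) ∂γ) (2 * π) := fun x => by
      simp only [add_right_comm x, hf.1]
    have hshift : ∫ x in (0 : ℝ)..(2 * π), f x * ∫ y, f (x + y) ∂γ =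
        ∫ x in -π..π, f x * ∫ y, f (x + y) ∂γ := by
      simpa only [zero_add, two_mul, neg_add_cancel_left] using hper.intervalIntegral_add_eq 0 (-π)
    simp only [hinner]
    rw [hshift, hf.autocovariance_eq γ]
    simp only [γ, re_charFun_gaussianReal, NNReal.coe_mul, NNReal.coe_natCast,
      Real.coe_toNNReal _ (sq_nonneg ση)]
    exact congrArg _ (tsum_congr fun k => by ring_nf)
  · have h := hf.autocovariance_eq (Measure.dirac 0)
    simp only [integral_dirac, add_zero, ← sq, charFun_dirac, inner_zero_left, Complex.ofReal_zero,
      zero_mul, Complex.exp_zero, Complex.one_re, mul_one] at h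
    rw [add_sub_assoc, h]

/-- Lemma (autocovariance of the oscillation model).  For `ℓ ≥ 1`,
`Γ(ℓ) = E[Y_ℓ Y_0] − E[Y_0]² = (1/(2π)) ∫_0^{2π} ∫_ℝ f(x) f(x+y) g_ℓ(y) dy dx − c_0(f)²
      = 2 ∑_{k≥1} |c_k(f)|² cos(kℓω) e^{−ℓk²σ_η²/2}`,
where `g_ℓ` is the density of `N(ℓω, ℓσ_η²)` (the density of `φ_ℓ − φ_0`); moreover
`Γ(0) = E[Y_0²] − E[Y_0]² = σ_ε² + (1/(2π)) ∫ f(x)² dx − c_0(f)²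
      = σ_ε² + 2 ∑_{k≥1} |c_k(f)|²`. -/
theorem autocovariance_formula
    (f : ℝ → ℝ) (hf : IsOscPattern f) (ω σε ση : ℝ)
    (hω : ω ∈ Ioo (0 : ℝ) π) (hσε : 0 < σε) (hση : 0 < ση) :
    (∀ ℓ : ℕ, 1 ≤ ℓ →
      (1 / (2 * π)) *
          (∫ x in (0 : ℝ)..(2 * π),
            ∫ y : ℝ, f x * f (x + y) *
              gaussianPDFReal ((ℓ : ℝ) * ω) ((ℓ : NNReal) * (ση ^ 2).toNNReal) y) -
        ((1 / (2 * π)) * ∫ x in (-π : ℝ)..π, f x) ^ 2 =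
      2 * ∑' k : ℕ, ‖fc f ((k : ℤ) + 1)‖ ^ 2 *
        Real.cos (((k : ℝ) + 1) * (ℓ : ℝ) * ω) *
        Real.exp (-(ℓ : ℝ) * ((k : ℝ) + 1) ^ 2 * ση ^ 2 / 2)) ∧
    (σε ^ 2 + (1 / (2 * π)) * (∫ x in (-π : ℝ)..π, f x ^ 2) -
        ((1 / (2 * π)) * ∫ x in (-π : ℝ)..π, f x) ^ 2 =
      σε ^ 2 + 2 * ∑' k : ℕ, ‖fc f ((k : ℤ) + 1)‖ ^ 2) :=
  autocovariance_formula_general f hf ω σε ση hση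
end
end

section
/- Let {|c_k|²}_{k≥1} and {|c⋆_k|²}_{k≥1} be square-summable nonnegative sequences, not identically zero, with first nonzero indices κ₁ and κ₁⋆ respectively, and let ω, ω⋆ ∈ (0,π), σ_η, σ_{η⋆} > 0. If ∑_{k=1}^{∞} |c_k|² cos(kℓω) e^{−ℓk²σ_η²/2} = ∑_{k=1}^{∞} |c⋆_k|² cos(kℓω⋆) e^{−ℓk²σ_{η⋆}²/2} for all ℓ ∈ ℕ₊, then κ₁² σ_η² = (κ₁⋆)² σ_{η⋆}² and |c_{κ₁}| = |c⋆_{κ₁⋆}|. -/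
/-!
Multiplying the series by `exp (ℓ κ₁² σ_η² / 2)` leaves `A cos (ℓ θ)`, with `A = |c_{κ₁}|²` and
`θ = κ₁ ω`, up to an error of order `exp (-ℓ (2κ₁ + 1) σ_η² / 2)`. Since `cos (ℓ θ)` does not tend
to `0` as `ℓ → ∞` (because `cos (2ℓθ) = 2 cos² (ℓθ) - 1`), the two sides can only agree if they
decay at the same rate, and then `A cos (ℓ θ) - B cos (ℓ φ) → 0`. The recurrence
`cos ((ℓ + 1) x) + cos ((ℓ - 1) x) = 2 cos x cos (ℓ x)` forces `cos θ = cos φ`, hence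
`cos (ℓ θ) = cos (ℓ φ)` for every `ℓ` (Chebyshev polynomials), and so `A = B`.
-/

open Real Set

noncomputable section

open Filter Topology

theorem tendsto_exp_neg_nat_mul_nhds_zero {d : ℝ} (hd : 0 < d) :
    Tendsto (fun n : ℕ => exp (-(n * d))) atTop (𝓝 0) :=
  tendsto_exp_neg_atTop_nhds_zero.comp
    (tendsto_natCast_atTop_atTop.atTop_mul_const hd)

theorem not_tendsto_cos_nat_mul_nhds_zero (θ : ℝ) :
    ¬ Tendsto (fun n : ℕ => cos (n * θ)) atTop (𝓝 0) := by
  intro h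
  have hdouble : Tendsto (fun n : ℕ => cos ((2 * n : ℕ) * θ)) atTop (𝓝 0) :=
    h.comp (tendsto_id.const_mul_atTop' two_pos)
  have hsq : Tendsto (fun n : ℕ => 2 * cos (n * θ) ^ 2 - 1) atTop (𝓝 (2 * 0 ^ 2 - 1)) :=
    ((h.pow 2).const_mul 2).sub_const 1
  have hlim : (0 : ℝ) = 2 * 0 ^ 2 - 1 := by
    refine tendsto_nhds_unique hdouble (hsq.congr fun n => ?_)
    rw [← cos_two_mul]; push_cast; ring_nf
  norm_num at hlim

theorem eq_zero_of_tendsto_mul_cos_nat_mul {A θ : ℝ}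
    (h : Tendsto (fun n : ℕ => A * cos (n * θ)) atTop (𝓝 0)) : A = 0 := by
  by_contra hA
  refine not_tendsto_cos_nat_mul_nhds_zero θ ?_
  simpa [hA] using h.const_mul A⁻¹

theorem cos_nat_mul_eq_of_cos_eq {θ φ : ℝ} (h : cos θ = cos φ) (n : ℕ) :
    cos (n * θ) = cos (n * φ) := by
  have hT := Polynomial.Chebyshev.T_real_cos
  simpa [h] using (hT θ n).symm.trans (h ▸ hT φ n)

theorem cos_add_two_mul_add_cos (n x : ℝ) :
    cos ((n + 2) * x) + cos (n * x) = 2 * cos x * cos ((n + 1) * x) := by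
  have h₁ : (n + 2) * x = (n + 1) * x + x := by ring
  have h₂ : n * x = (n + 1) * x - x := by ring
  rw [h₁, h₂, cos_add, cos_sub]
  ring

theorem eq_of_tendsto_mul_cos_sub_mul_cos {A B θ φ : ℝ} (hB : B ≠ 0)
    (h : Tendsto (fun n : ℕ => A * cos (n * θ) - B * cos (n * φ)) atTop (𝓝 0)) : A = B := by
  set u := fun n : ℕ => A * cos (n * θ) - B * cos (n * φ)
  -- the recurrence of `cos (n x)` annihilates the `A`-part
  have hrec : Tendsto (fun n : ℕ => u (n + 2) + u n - 2 * cos θ * u (n + 1)) atTop (𝓝 0) := by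
    simpa using ((h.comp (tendsto_add_atTop_nat 2)).add h).sub
      ((h.comp (tendsto_add_atTop_nat 1)).const_mul (2 * cos θ))
  have hcos : cos θ = cos φ := by
    have hrec' : Tendsto (fun n : ℕ => 2 * B * (cos θ - cos φ) * cos ((n + 1 : ℕ) * φ))
        atTop (𝓝 0) := by
      refine hrec.congr fun n => ?_
      simp only [u]
      push_cast
      have hθ := cos_add_two_mul_add_cos n θ
      have hφ := cos_add_two_mul_add_cos n φ
      linear_combination A * hθ - B * hφ
    have hcoef := eq_zero_of_tendsto_mul_cos_nat_mul ((tendsto_add_atTop_iff_nat 1).mp hrec')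
    have hdiff : cos θ - cos φ = 0 := by simpa [hB] using hcoef
    linarith
  have hdiff : Tendsto (fun n : ℕ => (A - B) * cos (n * θ)) atTop (𝓝 0) :=
    h.congr fun n => by simp only [u, cos_nat_mul_eq_of_cos_eq hcos n]; ring
  linarith [eq_zero_of_tendsto_mul_cos_nat_mul hdiff]

/-- Half the autocovariance `Γ ℓ / 2`, with weights `a k = |c_k|²`. -/
def autocovSeries (a : ℕ → ℝ) (ω σ : ℝ) (ℓ : ℕ) : ℝ :=
  ∑' k : ℕ, a (k + 1) * cos (((k : ℝ) + 1) * ℓ * ω) *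
    exp (-(ℓ : ℝ) * ((k : ℝ) + 1) ^ 2 * σ ^ 2 / 2)

theorem abs_mul_cos_mul_exp_sub_sq_le (x w μ σ : ℝ) (ℓ : ℕ) {m k : ℕ} (hmk : m ≤ k) :
    |x * cos w * exp (ℓ * (μ - ((k : ℝ) + 1) ^ 2) * σ ^ 2 / 2)| ≤
      |x| * exp (ℓ * (μ - ((m : ℝ) + 1) ^ 2) * σ ^ 2 / 2) := by
  rw [abs_mul, abs_mul, abs_exp]
  gcongr
  exact mul_le_of_le_one_right (abs_nonneg x) (abs_cos_le_one w)

theorem exp_mul_autocovSeries (a : ℕ → ℝ) (ω σ μ : ℝ) (ℓ : ℕ) :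
    exp (ℓ * (μ * σ ^ 2 / 2)) * autocovSeries a ω σ ℓ =
      ∑' k : ℕ, a (k + 1) * cos (((k : ℝ) + 1) * ℓ * ω) *
        exp (ℓ * (μ - ((k : ℝ) + 1) ^ 2) * σ ^ 2 / 2) := by
  rw [autocovSeries, ← tsum_mul_left]
  congr 1 with k
  have hsplit : (ℓ : ℝ) * (μ - ((k : ℝ) + 1) ^ 2) * σ ^ 2 / 2 =
      ℓ * (μ * σ ^ 2 / 2) + -(ℓ : ℝ) * ((k : ℝ) + 1) ^ 2 * σ ^ 2 / 2 := by ring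
  rw [hsplit, exp_add]
  ring

theorem tendsto_exp_mul_autocovSeries_sub {a : ℕ → ℝ} (ha : Summable a) (ω : ℝ) {σ : ℝ}
    (hσ : σ ≠ 0) {κ : ℕ} (hκ : 1 ≤ κ) (hmin : ∀ k : ℕ, 1 ≤ k → k < κ → a k = 0) :
    Tendsto (fun ℓ : ℕ => exp (ℓ * (κ ^ 2 * σ ^ 2 / 2)) * autocovSeries a ω σ ℓ -
      a κ * cos (ℓ * (κ * ω))) atTop (𝓝 0) := by
  obtain ⟨n, rfl⟩ : ∃ n, κ = n + 1 := ⟨κ - 1, by omega⟩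
  have hzero : ∀ k < n, a (k + 1) = 0 := fun k hk => hmin (k + 1) (by omega) (by omega)
  set t : ℕ → ℕ → ℝ := fun ℓ k => a (k + 1) * cos (((k : ℝ) + 1) * ℓ * ω) *
    exp (ℓ * (((n + 1 : ℕ) : ℝ) ^ 2 - ((k : ℝ) + 1) ^ 2) * σ ^ 2 / 2) with ht
  have hb : Summable fun k => a (k + 1) := (summable_nat_add_iff 1).mpr ha
  have hbound : ∀ ℓ k, |t ℓ k| ≤ |a (k + 1)| := by
    intro ℓ k
    by_cases hk : a (k + 1) = 0
    · simp [ht, hk]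
    calc |t ℓ k| ≤ |a (k + 1)| * exp (ℓ * (((n + 1 : ℕ) : ℝ) ^ 2 - ((n : ℝ) + 1) ^ 2) * σ ^ 2 / 2) :=
          abs_mul_cos_mul_exp_sub_sq_le _ _ _ _ _ (not_lt.mp fun h => hk (hzero k h))
      _ = |a (k + 1)| := by push_cast; simp
  set δ : ℝ := (2 * n + 3) * σ ^ 2 / 2 with hδ
  have htail : ∀ ℓ k, k ≠ n → |t ℓ k| ≤ |a (k + 1)| * exp (-(ℓ * δ)) := by
    intro ℓ k hkn
    by_cases hk : a (k + 1) = 0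
    · simp [ht, hk]
    calc |t ℓ k| ≤ |a (k + 1)| *
          exp (ℓ * (((n + 1 : ℕ) : ℝ) ^ 2 - (((n + 1 : ℕ) : ℝ) + 1) ^ 2) * σ ^ 2 / 2) :=
          abs_mul_cos_mul_exp_sub_sq_le _ _ _ _ _
            ((not_lt.mp fun h => hk (hzero k h)).lt_of_ne' hkn)
      _ = |a (k + 1)| * exp (-(ℓ * δ)) := by rw [hδ]; push_cast; ring_nf
  have hδ0 : 0 < δ := by positivity
  have hremainder : ∀ ℓ : ℕ, exp (ℓ * (((n + 1 : ℕ) : ℝ) ^ 2 * σ ^ 2 / 2)) * autocovSeries a ω σ ℓ -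
      a (n + 1) * cos (ℓ * ((n + 1 : ℕ) * ω)) = ∑' k, if k = n then 0 else t ℓ k := by
    intro ℓ
    have hlead : t ℓ n = a (n + 1) * cos (ℓ * ((n + 1 : ℕ) * ω)) := by
      simp only [ht]
      push_cast
      simp only [sub_self, mul_zero, zero_mul, zero_div, exp_zero, mul_one]
      ring_nf
    have hrescale : exp (ℓ * (((n + 1 : ℕ) : ℝ) ^ 2 * σ ^ 2 / 2)) * autocovSeries a ω σ ℓ =
        ∑' k, t ℓ k := exp_mul_autocovSeries a ω σ _ ℓ
    rw [hrescale, (hb.abs.of_norm_bounded (hbound ℓ)).tsum_eq_add_tsum_ite n, hlead]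
    ring
  refine squeeze_zero_norm (fun ℓ => ?_)
    (by simpa using (tendsto_exp_neg_nat_mul_nhds_zero hδ0).const_mul (∑' k, |a (k + 1)|))
  rw [hremainder]
  refine tsum_of_norm_bounded (hb.abs.hasSum.mul_right _) fun k => ?_
  split_ifs with hk
  · rw [norm_zero]; positivity
  · exact htail ℓ k hk

theorem le_of_tendsto_exp_mul_sub_mul_cos {u : ℕ → ℝ} {r s A B θ φ : ℝ}
    (hr : Tendsto (fun n : ℕ => exp (n * r) * u n - A * cos (n * θ)) atTop (𝓝 0))
    (hs : Tendsto (fun n : ℕ => exp (n * s) * u n - B * cos (n * φ)) atTop (𝓝 0))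
    (hB : B ≠ 0) : r ≤ s := by
  by_contra! hsr
  -- `exp (n r) u n` stays bounded, so the more slowly rescaled `exp (n s) u n` tends to `0`
  have hdecay : Tendsto (fun n : ℕ => exp (-(n * (r - s))) * (exp (n * r) * u n)) atTop (𝓝 0) := by
    refine squeeze_zero_norm (fun n => ?_) (by simpa using
      (tendsto_exp_neg_nat_mul_nhds_zero (sub_pos.2 hsr)).mul (hr.abs.const_add |A|))
    rw [norm_mul, norm_of_nonneg (exp_pos _).le]
    gcongr
    calc ‖exp (n * r) * u n‖ ≤ ‖A * cos (n * θ)‖ + ‖exp (n * r) * u n - A * cos (n * θ)‖ :=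
          norm_le_insert' _ _
      _ ≤ |A| + |exp (n * r) * u n - A * cos (n * θ)| := by
          rw [norm_mul, Real.norm_eq_abs, Real.norm_eq_abs]
          exact add_le_add_left (mul_le_of_le_one_right (abs_nonneg A) (abs_cos_le_one _)) _
  have hB_cos : Tendsto (fun n : ℕ => B * cos (n * φ)) atTop (𝓝 0) := by
    refine (sub_zero (0 : ℝ) ▸ hdecay.sub hs).congr fun n => ?_
    rw [← mul_assoc, ← exp_add]
    ring_nf
  exact hB (eq_zero_of_tendsto_mul_cos_nat_mul hB_cos)

theorem eq_and_eq_of_tendsto_exp_mul_sub_mul_cos {u : ℕ → ℝ} {r s A B θ φ : ℝ}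
    (hr : Tendsto (fun n : ℕ => exp (n * r) * u n - A * cos (n * θ)) atTop (𝓝 0))
    (hs : Tendsto (fun n : ℕ => exp (n * s) * u n - B * cos (n * φ)) atTop (𝓝 0))
    (hA : A ≠ 0) (hB : B ≠ 0) : r = s ∧ A = B := by
  obtain rfl : r = s :=
    le_antisymm (le_of_tendsto_exp_mul_sub_mul_cos hr hs hB)
      (le_of_tendsto_exp_mul_sub_mul_cos hs hr hA)
  exact ⟨rfl, eq_of_tendsto_mul_cos_sub_mul_cos (θ := θ) (φ := φ) hB
    ((sub_zero (0 : ℝ) ▸ hs.sub hr).congr fun n => by ring)⟩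

theorem first_nonzero_coefficient_identification_general
    (c cstar : ℕ → ℂ)
    (hc : Summable fun k : ℕ => ‖c k‖ ^ 2) (hcstar : Summable fun k : ℕ => ‖cstar k‖ ^ 2)
    (ω ωstar : ℝ)
    (ση σηstar : ℝ) (hση : 0 < ση) (hσηstar : 0 < σηstar)
    (κ₁ κ₁star : ℕ)
    (hκ₁pos : 1 ≤ κ₁) (hκ₁ne : c κ₁ ≠ 0) (hκ₁min : ∀ k : ℕ, 1 ≤ k → k < κ₁ → c k = 0)
    (hκ₁starpos : 1 ≤ κ₁star) (hκ₁starne : cstar κ₁star ≠ 0)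
    (hκ₁starmin : ∀ k : ℕ, 1 ≤ k → k < κ₁star → cstar k = 0)
    (heq : ∀ ℓ : ℕ, 1 ≤ ℓ →
      (∑' k : ℕ, ‖c (k + 1)‖ ^ 2 * Real.cos (((k : ℝ) + 1) * (ℓ : ℝ) * ω) *
          Real.exp (-(ℓ : ℝ) * ((k : ℝ) + 1) ^ 2 * ση ^ 2 / 2)) =
      ∑' k : ℕ, ‖cstar (k + 1)‖ ^ 2 * Real.cos (((k : ℝ) + 1) * (ℓ : ℝ) * ωstar) *
          Real.exp (-(ℓ : ℝ) * ((k : ℝ) + 1) ^ 2 * σηstar ^ 2 / 2)) :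
    (κ₁ : ℝ) ^ 2 * ση ^ 2 = (κ₁star : ℝ) ^ 2 * σηstar ^ 2 ∧
    ‖c κ₁‖ = ‖cstar κ₁star‖ := by
  have hseries : autocovSeries (‖cstar ·‖ ^ 2) ωstar σηstar =ᶠ[atTop]
      autocovSeries (‖c ·‖ ^ 2) ω ση :=
    eventually_atTop.2 ⟨1, fun ℓ hℓ => (heq ℓ hℓ).symm⟩
  have hlead := tendsto_exp_mul_autocovSeries_sub hc ω hση.ne' hκ₁pos
    fun k h₁ h₂ => by simp [hκ₁min k h₁ h₂]
  have hlead_star := (tendsto_exp_mul_autocovSeries_sub hcstar ωstar hσηstar.ne' hκ₁starpos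
    fun k h₁ h₂ => by simp [hκ₁starmin k h₁ h₂]).congr' (hseries.mono fun ℓ hℓ => by rw [hℓ])
  obtain ⟨hrate, hamp⟩ := eq_and_eq_of_tendsto_exp_mul_sub_mul_cos hlead hlead_star
    (by positivity) (by positivity)
  exact ⟨by linarith, (pow_left_inj₀ (norm_nonneg _) (norm_nonneg _) two_ne_zero).1 hamp⟩

/-- First identification step: if two weighted cosine series (the autocovariance
expansions) coincide for all lags `ℓ ≥ 1`, then `κ₁² σ_η² = (κ₁⋆)² σ_{η⋆}²` and
`|c_{κ₁}| = |c⋆_{κ₁⋆}|`, where `κ₁`, `κ₁⋆` are the first indices `k ≥ 1` with nonzero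
coefficient. -/
theorem first_nonzero_coefficient_identification
    (c cstar : ℕ → ℂ)
    (hc : Summable fun k : ℕ => ‖c k‖ ^ 2) (hcstar : Summable fun k : ℕ => ‖cstar k‖ ^ 2)
    (ω ωstar : ℝ) (hω : ω ∈ Ioo (0 : ℝ) π) (hωstar : ωstar ∈ Ioo (0 : ℝ) π)
    (ση σηstar : ℝ) (hση : 0 < ση) (hσηstar : 0 < σηstar)
    (κ₁ κ₁star : ℕ)
    (hκ₁pos : 1 ≤ κ₁) (hκ₁ne : c κ₁ ≠ 0) (hκ₁min : ∀ k : ℕ, 1 ≤ k → k < κ₁ → c k = 0)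
    (hκ₁starpos : 1 ≤ κ₁star) (hκ₁starne : cstar κ₁star ≠ 0)
    (hκ₁starmin : ∀ k : ℕ, 1 ≤ k → k < κ₁star → cstar k = 0)
    (heq : ∀ ℓ : ℕ, 1 ≤ ℓ →
      (∑' k : ℕ, ‖c (k + 1)‖ ^ 2 * Real.cos (((k : ℝ) + 1) * (ℓ : ℝ) * ω) *
          Real.exp (-(ℓ : ℝ) * ((k : ℝ) + 1) ^ 2 * ση ^ 2 / 2)) =
      ∑' k : ℕ, ‖cstar (k + 1)‖ ^ 2 * Real.cos (((k : ℝ) + 1) * (ℓ : ℝ) * ωstar) *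
          Real.exp (-(ℓ : ℝ) * ((k : ℝ) + 1) ^ 2 * σηstar ^ 2 / 2)) :
    (κ₁ : ℝ) ^ 2 * ση ^ 2 = (κ₁star : ℝ) ^ 2 * σηstar ^ 2 ∧
    ‖c κ₁‖ = ‖cstar κ₁star‖ :=
  first_nonzero_coefficient_identification_general c cstar hc hcstar ω ωstar ση σηstar hση hσηstar
    κ₁ κ₁star hκ₁pos hκ₁ne hκ₁min hκ₁starpos hκ₁starne hκ₁starmin heq
end
end

section
/- In the setting of the preceding claim (equality of the two cosine series for all ℓ ≥ 1, with κ_i(f) = γ·κ_i(f⋆) for all i), assume in addition that each of the families {κ_i(f)}_{i∈ℕ₊} and {κ_i(f⋆)}_{i∈ℕ₊} is setwise coprime. Then γ = 1, and if moreover ω⋆ ∉ πℚ and ω, ω⋆ ∈ (0,π), then ω = ω⋆. -/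
/-!
Writing `γ = n / d` in lowest terms, `d κ_i(f) = n κ_i(f⋆)` makes `d` divide every `κ_i(f⋆)` and
`n` divide every `κ_i(f)`, so coprimality forces `γ = ±1`, and `γ = -1` is impossible since the
`κ_i` are not all zero.

Then `f` and `f⋆` have the same positive spectrum. The `ℓ`-th series is
`∑ₖ aₖ cos (ℓ k ω) exp (-ℓ k² σ² / 2)` with `aₖ = |c_k|²`. Going up the spectrum, the lower terms
cancel by induction and the tails are `O(exp (-ℓ (k+1)² min(σ², σ⋆²) / 2))`, so the `k`-th terms
agree to leading exponential order as `ℓ → ∞`. This forces `σ = σ⋆`, `aₖ = a⋆ₖ` and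
`cos (ℓ k ω) = cos (ℓ k ω⋆)`, because `A cos (ℓ α) - B cos (ℓ β) → 0` forces `A = B` and
`cos α = cos β`. Hence for each `k` in the spectrum, `k (ω - ω⋆)` or `k (ω + ω⋆)` lies in `2πℤ`.
Since `ω⋆ ∉ πℚ`, the same sign works for the whole spectrum (otherwise
`2 k m ω⋆ ∈ 2πℤ` for some positive `k`, `m`). By coprimality it then works for
`k = 1`, and in `(0, π)` this leaves only `ω = ω⋆`.
-/

open Real Set

noncomputable section

/-- `kappa f i` is the `(i+1)`-st positive integer `k` with `c_k(f) ≠ 0`. -/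
def kappa (f : ℝ → ℝ) (i : ℕ) : ℕ :=
  Nat.nth (fun k : ℕ => 0 < k ∧ fc f (k : ℤ) ≠ 0) i

open Filter Topology

theorem not_tendsto_const_mul_cos_nat_mul {c : ℝ} (hc : c ≠ 0) (θ : ℝ) :
    ¬ Tendsto (fun ℓ : ℕ => c * cos (ℓ * θ)) atTop (𝓝 0) := by
  intro h
  have h₁ : Tendsto (fun ℓ : ℕ => cos (ℓ * θ)) atTop (𝓝 0) := by
    simpa [hc] using h.const_mul c⁻¹
  have h₂ : Tendsto (fun ℓ : ℕ => cos ((2 * ℓ : ℕ) * θ)) atTop (𝓝 0) :=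
    h₁.comp (tendsto_id.const_mul_atTop' two_pos)
  -- by `cos (2x) = 2 cos² x - 1` the even subsequence would also tend to `-1`
  have h₃ : Tendsto (fun ℓ : ℕ => cos ((2 * ℓ : ℕ) * θ)) atTop (𝓝 (2 * 0 ^ 2 - 1)) := by
    simp_rw [Nat.cast_mul, Nat.cast_ofNat, mul_assoc, cos_two_mul]
    exact ((h₁.pow 2).const_mul 2).sub_const 1
  have := tendsto_nhds_unique h₂ h₃
  norm_num at this

theorem cos_nat_add_two_mul_add_cos_nat_mul (ℓ : ℕ) (x : ℝ) :
    cos ((ℓ + 2 : ℕ) * x) + cos (ℓ * x) = 2 * cos x * cos ((ℓ + 1 : ℕ) * x) := by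
  rw [cos_add_cos]
  push_cast
  ring_nf

theorem cos_nat_mul_eq_of_cos_eq_s10 {α β : ℝ} (h : cos α = cos β) (ℓ : ℕ) :
    cos (ℓ * α) = cos (ℓ * β) := by
  have hα := Polynomial.Chebyshev.T_real_cos α ℓ
  have hβ := Polynomial.Chebyshev.T_real_cos β ℓ
  push_cast at hα hβ
  rw [← hα, ← hβ, h]

theorem eq_and_cos_nat_mul_eq_of_tendsto {A B α β : ℝ} (hA : A ≠ 0)
    (h : Tendsto (fun ℓ : ℕ => A * cos (ℓ * α) - B * cos (ℓ * β)) atTop (𝓝 0)) :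
    A = B ∧ ∀ ℓ : ℕ, cos (ℓ * α) = cos (ℓ * β) := by
  set g : ℕ → ℝ := fun ℓ => A * cos (ℓ * α) - B * cos (ℓ * β)
  -- The three-term recurrence of `cos (ℓ * x)` annihilates the `β` part of `g`.
  have hrec : (fun ℓ : ℕ => g (ℓ + 2) + g ℓ - 2 * cos β * g (ℓ + 1)) =
      fun ℓ : ℕ => 2 * A * (cos α - cos β) * cos ((ℓ + 1 : ℕ) * α) := by
    funext ℓ
    have hα := cos_nat_add_two_mul_add_cos_nat_mul ℓ α
    have hβ := cos_nat_add_two_mul_add_cos_nat_mul ℓ β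
    simp only [g]
    linear_combination A * hα - B * hβ
  have hcos : cos α = cos β := by
    by_contra hne
    have hlim : Tendsto (fun ℓ : ℕ => g (ℓ + 2) + g ℓ - 2 * cos β * g (ℓ + 1)) atTop (𝓝 0) := by
      simpa using (((tendsto_add_atTop_iff_nat 2).2 h).add h).sub
        (((tendsto_add_atTop_iff_nat 1).2 h).const_mul (2 * cos β))
    rw [hrec] at hlim
    exact not_tendsto_const_mul_cos_nat_mul (by simp [hA, sub_ne_zero.2 hne]) α
      ((tendsto_add_atTop_iff_nat 1).1 hlim)
  have hcosℓ := cos_nat_mul_eq_of_cos_eq_s10 hcos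
  refine ⟨?_, hcosℓ⟩
  by_contra hne
  refine not_tendsto_const_mul_cos_nat_mul (sub_ne_zero.2 hne) β ?_
  simpa only [g, hcosℓ, ← sub_mul] using h

theorem tendsto_exp_neg_nat_mul {c : ℝ} (hc : 0 < c) :
    Tendsto (fun ℓ : ℕ => exp (-(ℓ * c))) atTop (𝓝 0) :=
  tendsto_exp_neg_atTop_nhds_zero.comp (tendsto_natCast_atTop_atTop.atTop_mul_const hc)

section DampedPair

variable {A B C α β s t r : ℝ}

theorem tendsto_of_abs_damped_sub_le (hsr : s < r)
    (h : ∀ᶠ ℓ : ℕ in atTop, |A * cos (ℓ * α) * exp (-(ℓ * s)) - B * cos (ℓ * β) * exp (-(ℓ * t))|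
      ≤ C * exp (-(ℓ * r))) :
    Tendsto (fun ℓ : ℕ => A * cos (ℓ * α) - B * cos (ℓ * β) * exp (-(ℓ * (t - s)))) atTop (𝓝 0) := by
  refine squeeze_zero_norm' (h.mono fun ℓ hℓ => ?_)
    (by simpa using (tendsto_exp_neg_nat_mul (sub_pos.2 hsr)).const_mul C)
  have hexp : exp (ℓ * s) * exp (-(ℓ * r)) = exp (-(ℓ * (r - s))) := by
    rw [← exp_add]; ring_nf
  calc ‖A * cos (ℓ * α) - B * cos (ℓ * β) * exp (-(ℓ * (t - s)))‖
      = exp (ℓ * s) *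
          |A * cos (ℓ * α) * exp (-(ℓ * s)) - B * cos (ℓ * β) * exp (-(ℓ * t))| := by
        have hinv : exp (ℓ * s) * exp (-(ℓ * s)) = 1 := by rw [← exp_add]; simp
        rw [Real.norm_eq_abs, ← abs_of_pos (exp_pos (ℓ * s)), ← abs_mul,
          show -(ℓ * (t - s)) = ℓ * s + -(ℓ * t) by ring, exp_add]
        congr 1
        linear_combination -(A * cos (ℓ * α)) * hinv
    _ ≤ exp (ℓ * s) * (C * exp (-(ℓ * r))) := by gcongr
    _ = C * exp (-(ℓ * (r - s))) := by rw [← hexp]; ring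

theorem le_of_abs_damped_sub_le (hA : A ≠ 0) (hsr : s < r)
    (h : ∀ᶠ ℓ : ℕ in atTop, |A * cos (ℓ * α) * exp (-(ℓ * s)) - B * cos (ℓ * β) * exp (-(ℓ * t))|
      ≤ C * exp (-(ℓ * r))) :
    t ≤ s := by
  by_contra! hst
  have hB : Tendsto (fun ℓ : ℕ => B * cos (ℓ * β) * exp (-(ℓ * (t - s)))) atTop (𝓝 0) := by
    refine squeeze_zero_norm (fun ℓ => ?_)
      (by simpa using (tendsto_exp_neg_nat_mul (sub_pos.2 hst)).const_mul |B|)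
    rw [norm_mul, norm_mul, Real.norm_of_nonneg (exp_pos _).le]
    gcongr
    exact mul_le_of_le_one_right (norm_nonneg B) (abs_cos_le_one _)
  exact not_tendsto_const_mul_cos_nat_mul hA α
    (by simpa using (tendsto_of_abs_damped_sub_le hsr h).add hB)

theorem eq_of_abs_damped_sub_le (hA : A ≠ 0) (hB : B ≠ 0) (hr : min s t < r)
    (h : ∀ᶠ ℓ : ℕ in atTop, |A * cos (ℓ * α) * exp (-(ℓ * s)) - B * cos (ℓ * β) * exp (-(ℓ * t))|
      ≤ C * exp (-(ℓ * r))) :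
    s = t ∧ A = B ∧ ∀ ℓ : ℕ, cos (ℓ * α) = cos (ℓ * β) := by
  have h' : ∀ᶠ ℓ : ℕ in atTop,
      |B * cos (ℓ * β) * exp (-(ℓ * t)) - A * cos (ℓ * α) * exp (-(ℓ * s))| ≤ C * exp (-(ℓ * r)) :=
    h.mono fun ℓ hℓ => by rwa [abs_sub_comm]
  have hst : s = t := by
    rcases min_lt_iff.1 hr with hsr | htr
    · have hts := le_of_abs_damped_sub_le hA hsr h
      exact le_antisymm (le_of_abs_damped_sub_le hB (hts.trans_lt hsr) h') hts
    · have hst := le_of_abs_damped_sub_le hB htr h'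
      exact le_antisymm hst (le_of_abs_damped_sub_le hA (hst.trans_lt htr) h)
  subst hst
  exact ⟨rfl, eq_and_cos_nat_mul_eq_of_tendsto hA
    (by simpa using tendsto_of_abs_damped_sub_le (min_self s ▸ hr) h)⟩

end DampedPair

/-- The `k`-th term of the `ℓ`-th series, at frequency `k + 1`; `s` stands for `σ² / 2`. -/
def dampedCos (a : ℕ → ℝ) (α s : ℝ) (ℓ k : ℕ) : ℝ :=
  a k * cos (ℓ * (((k : ℝ) + 1) * α)) * exp (-(ℓ * (((k : ℝ) + 1) ^ 2 * s)))

section DampedCosSeries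

variable {a b : ℕ → ℝ} {α β s t : ℝ}

theorem abs_dampedCos_le (ha : 0 ≤ a) (hs : 0 ≤ s) (ℓ : ℕ) {K k : ℕ} (hKk : K ≤ k) :
    |dampedCos a α s ℓ k| ≤ a k * exp (-(ℓ * ((K + 1) ^ 2 * s))) := by
  rw [dampedCos, abs_mul, abs_mul, abs_of_nonneg (ha k), abs_of_pos (exp_pos _)]
  refine mul_le_mul (mul_le_of_le_one_right (ha k) (abs_cos_le_one _)) ?_ (exp_pos _).le (ha k)
  gcongr

theorem summable_dampedCos (ha : 0 ≤ a) (has : Summable a) (hs : 0 ≤ s) (ℓ : ℕ) :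
    Summable (dampedCos a α s ℓ) :=
  has.of_norm_bounded fun k => by
    simpa using abs_dampedCos_le (α := α) ha hs ℓ (Nat.zero_le k) |>.trans
      (mul_le_of_le_one_right (ha k) (exp_le_one_iff.2 (by simp; positivity)))

theorem abs_tsum_dampedCos_sub_sum_le (ha : 0 ≤ a) (has : Summable a) (hs : 0 ≤ s) (ℓ K : ℕ) :
    |∑' k, dampedCos a α s ℓ k - ∑ k ∈ Finset.range K, dampedCos a α s ℓ k| ≤
      (∑' k, a k) * exp (-(ℓ * ((K + 1) ^ 2 * s))) := by
  rw [← (summable_dampedCos ha has hs ℓ).sum_add_tsum_nat_add K, add_sub_cancel_left]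
  refine (tsum_of_norm_bounded (((summable_nat_add_iff K).2 has).hasSum.mul_right _)
    fun k => (Real.norm_eq_abs _).trans_le (abs_dampedCos_le ha hs ℓ (Nat.le_add_left K k))).trans ?_
  exact mul_le_mul_of_nonneg_right (tsum_comp_le_tsum_of_inj has ha (add_left_injective K))
    (exp_pos _).le

theorem eq_of_tsum_dampedCos_eq (ha : 0 ≤ a) (hb : 0 ≤ b) (has : Summable a) (hbs : Summable b)
    (hs : 0 < s) (ht : 0 < t) (hab : ∀ k, a k = 0 ↔ b k = 0)
    (heq : ∀ᶠ ℓ : ℕ in atTop, ∑' k, dampedCos a α s ℓ k = ∑' k, dampedCos b β t ℓ k)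
    (k : ℕ) (hk : a k ≠ 0) :
    s = t ∧ a k = b k ∧ ∀ ℓ : ℕ, cos (ℓ * (((k : ℝ) + 1) * α)) = cos (ℓ * (((k : ℝ) + 1) * β)) := by
  -- The terms below `k` cancel by induction, so the `k`-th terms differ by the difference of
  -- the two tails, which is `O(exp (-ℓ (k + 2)² min s t))`.
  induction k using Nat.strong_induction_on with
  | _ k IH =>
  have hprefix : ∀ ℓ, ∑ j ∈ Finset.range k, dampedCos a α s ℓ j =
      ∑ j ∈ Finset.range k, dampedCos b β t ℓ j := fun ℓ => by
    refine Finset.sum_congr rfl fun j hj => ?_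
    by_cases haj : a j = 0
    · simp [dampedCos, haj, (hab j).1 haj]
    · obtain ⟨rfl, hj_eq, hcos⟩ := IH j (Finset.mem_range.1 hj) haj
      simp only [dampedCos, hj_eq, hcos]
  have hbound : ∀ᶠ ℓ : ℕ in atTop, |dampedCos a α s ℓ k - dampedCos b β t ℓ k| ≤
      ((∑' j, a j) + ∑' j, b j) * exp (-(ℓ * (((k : ℝ) + 2) ^ 2 * min s t))) := by
    filter_upwards [heq] with ℓ hℓ
    have hsplit : dampedCos a α s ℓ k - dampedCos b β t ℓ k =
        (∑' j, dampedCos b β t ℓ j - ∑ j ∈ Finset.range (k + 1), dampedCos b β t ℓ j) -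
          (∑' j, dampedCos a α s ℓ j - ∑ j ∈ Finset.range (k + 1), dampedCos a α s ℓ j) := by
      rw [Finset.sum_range_succ, Finset.sum_range_succ, hprefix, hℓ]
      ring
    have hexp : ∀ u, min s t ≤ u → exp (-(ℓ * ((((k + 1 : ℕ) : ℝ) + 1) ^ 2 * u))) ≤
        exp (-(ℓ * (((k : ℝ) + 2) ^ 2 * min s t))) := fun u hu => by
      rw [show (((k + 1 : ℕ) : ℝ) + 1) = (k : ℝ) + 2 by push_cast; ring]
      gcongr
    rw [hsplit, add_mul]
    refine (abs_sub _ _).trans ((add_le_add ?_ ?_).trans_eq (add_comm _ _))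
    · exact (abs_tsum_dampedCos_sub_sum_le hb hbs ht.le ℓ (k + 1)).trans
        (mul_le_mul_of_nonneg_left (hexp t (min_le_right s t)) (tsum_nonneg hb))
    · exact (abs_tsum_dampedCos_sub_sum_le ha has hs.le ℓ (k + 1)).trans
        (mul_le_mul_of_nonneg_left (hexp s (min_le_left s t)) (tsum_nonneg ha))
  have hr : min (((k : ℝ) + 1) ^ 2 * s) (((k : ℝ) + 1) ^ 2 * t) < ((k : ℝ) + 2) ^ 2 * min s t := by
    rw [← mul_min_of_nonneg _ _ (by positivity)]
    gcongr
    norm_num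
  obtain ⟨hst, hab_eq, hcos⟩ :=
    eq_of_abs_damped_sub_le hk (fun hbk => hk ((hab k).2 hbk)) hr hbound
  exact ⟨mul_left_cancel₀ (by positivity) hst, hab_eq, hcos⟩

end DampedCosSeries

def SetwiseCoprime (p : ℕ → Prop) : Prop := ∀ e : ℕ, (∀ k, p k → e ∣ k) → e = 1

theorem SetwiseCoprime.exists_ne_zero {p : ℕ → Prop} (hp : SetwiseCoprime p) :
    ∃ k, p k ∧ k ≠ 0 := by
  by_contra! h
  exact zero_ne_one (hp 0 fun k hk => h k hk ▸ dvd_rfl)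

theorem Rat.den_dvd_of_natCast_eq_mul_natCast {γ : ℚ} {k m : ℕ} (h : (m : ℚ) = γ * k) :
    γ.den ∣ k := by
  rcases eq_or_ne k 0 with rfl | hk
  · exact dvd_zero _
  have hγ : γ = Rat.divInt m k := by
    rw [Rat.divInt_eq_div]
    push_cast
    field_simp
    exact h.symm
  exact_mod_cast hγ ▸ Rat.den_dvd m k

theorem SetwiseCoprime.eq_one_of_nth_eq_mul {p q : ℕ → Prop} (hp : SetwiseCoprime p)
    (hq : SetwiseCoprime q) {γ : ℚ} (h : ∀ i, (Nat.nth p i : ℚ) = γ * Nat.nth q i) : γ = 1 := by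
  classical
  have hden : γ.den = 1 := hq _ fun k hk =>
    Rat.den_dvd_of_natCast_eq_mul_natCast (m := Nat.nth p (Nat.count q k))
      (by rw [h, Nat.nth_count hk])
  have hγ : (γ.num : ℚ) = γ := Rat.coe_int_num_of_den_eq_one hden
  have hp_mul : ∀ k, p k → (k : ℤ) = γ.num * Nat.nth q (Nat.count p k) := fun k hk => by
    have := h (Nat.count p k)
    rw [Nat.nth_count hk, ← hγ] at this
    exact_mod_cast this
  have hnum : γ.num.natAbs = 1 := hp _ fun k hk =>
    Int.natAbs_dvd_natAbs.2 (Dvd.intro _ (hp_mul k hk).symm)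
  rcases Int.natAbs_eq_iff.1 hnum with hnum | hnum
  · rw [← hγ, hnum]; rfl
  · obtain ⟨k, hk, hk_ne⟩ := hp.exists_ne_zero
    have := hp_mul k hk
    rw [hnum] at this
    omega

theorem SetwiseCoprime.eq_zero_of_forall_nsmul_eq_zero {G : Type*} [AddMonoid G] {p : ℕ → Prop}
    (hp : SetwiseCoprime p) {x : G} (h : ∀ n, p n → n • x = 0) : x = 0 :=
  AddMonoid.addOrderOf_eq_one_iff.1 <| hp _ fun n hn => addOrderOf_dvd_of_nsmul_eq_zero (h n hn)

theorem forall_nsmul_eq_zero_or_forall_nsmul_eq_zero {G : Type*} [AddCommGroup G] {p : ℕ → Prop}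
    {x y : G} (hxy : ¬ IsOfFinAddOrder (x - y)) (h : ∀ n, p n → n • x = 0 ∨ n • y = 0) :
    (∀ n, p n → n • x = 0) ∨ (∀ n, p n → n • y = 0) := by
  by_contra! ⟨⟨m, hm, hmx⟩, ⟨n, hn, hny⟩⟩
  have hmy := (h m hm).resolve_left hmx
  have hnx := (h n hn).resolve_right hny
  refine hxy (isOfFinAddOrder_iff_nsmul_eq_zero.2 ⟨m * n, ?_, ?_⟩)
  · have : m ≠ 0 := by rintro rfl; simp at hmx
    have : n ≠ 0 := by rintro rfl; simp at hny
    positivity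
  · rw [nsmul_sub, mul_nsmul' x, mul_nsmul y, hnx, hmy, nsmul_zero, nsmul_zero, sub_zero]

theorem eq_of_cos_nat_mul_eq {p : ℕ → Prop} (hp : SetwiseCoprime p) {ω ω' : ℝ}
    (hcos : ∀ n, p n → cos (n * ω) = cos (n * ω'))
    (hirr : ∀ q : ℚ, ω' ≠ π * q) (hω : ω ∈ Ioo 0 π) (hω' : ω' ∈ Ioo 0 π) : ω = ω' := by
  have hdich : ∀ n, p n → n • ((ω + ω' : ℝ) : Angle) = 0 ∨ n • ((ω - ω' : ℝ) : Angle) = 0 := by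
    intro n hn
    have := Angle.cos_eq_iff_eq_or_eq_neg.1 (by simpa only [Angle.cos_coe] using hcos n hn :
      Angle.cos ((n * ω : ℝ) : Angle) = Angle.cos ((n * ω' : ℝ) : Angle))
    rw [Angle.natCast_mul_eq_nsmul, Angle.natCast_mul_eq_nsmul] at this
    simp only [Angle.coe_sub, Angle.coe_add, nsmul_sub, nsmul_add]
    rw [sub_eq_zero, add_eq_zero_iff_eq_neg]
    exact this.symm
  have htors : ¬ IsOfFinAddOrder (((ω + ω' : ℝ) : Angle) - ((ω - ω' : ℝ) : Angle)) := by
    have : Fact (0 < 2 * π) := ⟨two_pi_pos⟩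
    rw [← Angle.coe_sub, show ω + ω' - (ω - ω') = 2 * ω' by ring]
    refine AddCircle.not_isOfFinAddOrder_iff_forall_rat_ne_div.2 fun q hq => hirr q ?_
    field_simp at hq
    linarith
  have hzero : ∀ x : ℝ, (x : Angle) = 0 → -(2 * π) < x → x < 2 * π → x = 0 := fun x hx h₁ h₂ =>
    (cos_eq_one_iff_of_lt_of_lt h₁ h₂).1 (by rw [← Angle.cos_coe, hx, Angle.cos_zero])
  obtain ⟨hω₀, hω₁⟩ := hω
  obtain ⟨hω'₀, hω'₁⟩ := hω'
  rcases forall_nsmul_eq_zero_or_forall_nsmul_eq_zero htors hdich with h | h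
  · have := hzero _ (hp.eq_zero_of_forall_nsmul_eq_zero h) (by linarith) (by linarith)
    linarith
  · have := hzero _ (hp.eq_zero_of_forall_nsmul_eq_zero h) (by linarith) (by linarith)
    linarith

theorem Nat.mem_of_nth_eq_nth {p q : ℕ → Prop} (hp : ¬ p 0) (h : Nat.nth p = Nat.nth q) {k : ℕ}
    (hk : p k) : q k := by
  classical
  have hnth : Nat.nth q (Nat.count p k) = k := h ▸ Nat.nth_count hk
  have hk0 : k ≠ 0 := by rintro rfl; exact hp hk
  simpa only [hnth] using Nat.nth_mem_of_ne_zero (p := q) (n := Nat.count p k) (by rwa [hnth])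

theorem Nat.eq_of_nth_eq_nth {p q : ℕ → Prop} (hp : ¬ p 0) (hq : ¬ q 0)
    (h : Nat.nth p = Nat.nth q) : p = q :=
  funext fun _ => propext ⟨Nat.mem_of_nth_eq_nth hp h, Nat.mem_of_nth_eq_nth hq h.symm⟩

def posSpectrum (f : ℝ → ℝ) (k : ℕ) : Prop := 0 < k ∧ fc f k ≠ 0

theorem posSpectrum_eq_of_kappa_eq {f g : ℝ → ℝ} (h : ∀ i, kappa f i = kappa g i) :
    posSpectrum f = posSpectrum g :=
  Nat.eq_of_nth_eq_nth (fun h => h.1.false) (fun h => h.1.false) (funext h)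

theorem cos_nat_mul_eq_of_tsum_eq {f g : ℝ → ℝ} {ω ω' σ σ' : ℝ}
    (hf : Summable fun k : ℤ => ‖fc f k‖ ^ 2) (hg : Summable fun k : ℤ => ‖fc g k‖ ^ 2)
    (hσ : 0 < σ) (hσ' : 0 < σ') (hsupp : posSpectrum f = posSpectrum g)
    (heq : ∀ ℓ : ℕ, 1 ≤ ℓ →
      (∑' k : ℕ, ‖fc f ((k : ℤ) + 1)‖ ^ 2 * cos (((k : ℝ) + 1) * ℓ * ω) *
          exp (-(ℓ : ℝ) * ((k : ℝ) + 1) ^ 2 * σ ^ 2 / 2)) =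
      ∑' k : ℕ, ‖fc g ((k : ℤ) + 1)‖ ^ 2 * cos (((k : ℝ) + 1) * ℓ * ω') *
          exp (-(ℓ : ℝ) * ((k : ℝ) + 1) ^ 2 * σ' ^ 2 / 2))
    {n : ℕ} (hn : posSpectrum f n) : cos (n * ω) = cos (n * ω') := by
  set a : ℕ → ℝ := fun k => ‖fc f ((k : ℤ) + 1)‖ ^ 2
  set b : ℕ → ℝ := fun k => ‖fc g ((k : ℤ) + 1)‖ ^ 2
  have hshift : Function.Injective fun k : ℕ => (k : ℤ) + 1 := fun _ _ h => by simpa using h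
  have hab : ∀ k, a k = 0 ↔ b k = 0 := fun k => by
    have := congrFun hsupp (k + 1)
    simp only [posSpectrum, Nat.cast_add, Nat.cast_one, Nat.succ_pos, true_and, eq_iff_iff,
      ne_eq, not_iff_not] at this
    simp only [a, b, pow_eq_zero_iff two_ne_zero, norm_eq_zero, this]
  have hseries : ∀ᶠ ℓ : ℕ in atTop,
      ∑' k, dampedCos a ω (σ ^ 2 / 2) ℓ k = ∑' k, dampedCos b ω' (σ' ^ 2 / 2) ℓ k :=
    eventually_atTop.2 ⟨1, fun ℓ hℓ => by
      convert heq ℓ hℓ using 3 <;> · simp only [dampedCos, a, b]; ring_nf⟩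
  obtain ⟨k, rfl⟩ := Nat.exists_eq_succ_of_ne_zero hn.1.ne'
  have hak : a k ≠ 0 := by simpa [a] using hn.2
  simpa using (eq_of_tsum_dampedCos_eq (fun _ => sq_nonneg _) (fun _ => sq_nonneg _)
    (hf.comp_injective hshift) (hg.comp_injective hshift) (by positivity) (by positivity)
    hab hseries k hak).2.2 1

theorem gamma_eq_one_and_omega_identification_general
    (f fstar : ℝ → ℝ) (hf : IsOscPattern f) (hfstar : IsOscPattern fstar)
    (ω ωstar ση σηstar : ℝ) (hση : 0 < ση) (hσηstar : 0 < σηstar)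
    (heq : ∀ ℓ : ℕ, 1 ≤ ℓ →
      (∑' k : ℕ, ‖fc f ((k : ℤ) + 1)‖ ^ 2 * Real.cos (((k : ℝ) + 1) * (ℓ : ℝ) * ω) *
          Real.exp (-(ℓ : ℝ) * ((k : ℝ) + 1) ^ 2 * ση ^ 2 / 2)) =
      ∑' k : ℕ, ‖fc fstar ((k : ℤ) + 1)‖ ^ 2 *
          Real.cos (((k : ℝ) + 1) * (ℓ : ℝ) * ωstar) *
          Real.exp (-(ℓ : ℝ) * ((k : ℝ) + 1) ^ 2 * σηstar ^ 2 / 2))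
    (γ : ℚ) (hγ : ∀ i : ℕ, (kappa f i : ℚ) = γ * (kappa fstar i : ℚ))
    (hcoprime : ∀ e : ℕ, (∀ k : ℕ, 0 < k → fc f (k : ℤ) ≠ 0 → e ∣ k) → e = 1)
    (hcoprimestar : ∀ e : ℕ, (∀ k : ℕ, 0 < k → fc fstar (k : ℤ) ≠ 0 → e ∣ k) → e = 1) :
    γ = 1 ∧
    ((∀ q : ℚ, ωstar ≠ π * (q : ℝ)) → ω ∈ Ioo (0 : ℝ) π → ωstar ∈ Ioo (0 : ℝ) π →
      ω = ωstar) := by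
  have hcop : SetwiseCoprime (posSpectrum f) :=
    fun e he => hcoprime e fun k hk hne => he k ⟨hk, hne⟩
  have hcop_star : SetwiseCoprime (posSpectrum fstar) :=
    fun e he => hcoprimestar e fun k hk hne => he k ⟨hk, hne⟩
  have hγ_one : γ = 1 := hcop.eq_one_of_nth_eq_mul hcop_star hγ
  refine ⟨hγ_one, fun hirr hω hωstar => eq_of_cos_nat_mul_eq hcop (fun n hn => ?_) hirr hω hωstar⟩
  have hsupp : posSpectrum f = posSpectrum fstar :=
    posSpectrum_eq_of_kappa_eq fun i => by simpa [hγ_one] using hγ i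
  exact cos_nat_mul_eq_of_tsum_eq hf.2.1 hfstar.2.1 hση hσηstar hsupp heq hn

/-- Under equality of the two cosine series for all `ℓ ≥ 1`, with `κ_i(f) = γ·κ_i(f⋆)`
for all `i`, if both families `{κ_i(f)}` and `{κ_i(f⋆)}` are setwise coprime then
`γ = 1`; if moreover `ω⋆ ∉ πℚ` and `ω, ω⋆ ∈ (0,π)`, then `ω = ω⋆`. -/
theorem gamma_eq_one_and_omega_identification
    (f fstar : ℝ → ℝ) (hf : IsOscPattern f) (hfstar : IsOscPattern fstar)
    (hf_nonconst : ∃ x y : ℝ, f x ≠ f y) (hfstar_nonconst : ∃ x y : ℝ, fstar x ≠ fstar y)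
    (ω ωstar ση σηstar : ℝ) (hση : 0 < ση) (hσηstar : 0 < σηstar)
    (heq : ∀ ℓ : ℕ, 1 ≤ ℓ →
      (∑' k : ℕ, ‖fc f ((k : ℤ) + 1)‖ ^ 2 * Real.cos (((k : ℝ) + 1) * (ℓ : ℝ) * ω) *
          Real.exp (-(ℓ : ℝ) * ((k : ℝ) + 1) ^ 2 * ση ^ 2 / 2)) =
      ∑' k : ℕ, ‖fc fstar ((k : ℤ) + 1)‖ ^ 2 *
          Real.cos (((k : ℝ) + 1) * (ℓ : ℝ) * ωstar) *
          Real.exp (-(ℓ : ℝ) * ((k : ℝ) + 1) ^ 2 * σηstar ^ 2 / 2))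
    (γ : ℚ) (hγ : ∀ i : ℕ, (kappa f i : ℚ) = γ * (kappa fstar i : ℚ))
    (hcoprime : ∀ e : ℕ, (∀ k : ℕ, 0 < k → fc f (k : ℤ) ≠ 0 → e ∣ k) → e = 1)
    (hcoprimestar : ∀ e : ℕ, (∀ k : ℕ, 0 < k → fc fstar (k : ℤ) ≠ 0 → e ∣ k) → e = 1) :
    γ = 1 ∧
    ((∀ q : ℚ, ωstar ≠ π * (q : ℝ)) → ω ∈ Ioo (0 : ℝ) π → ωstar ∈ Ioo (0 : ℝ) π →
      ω = ωstar) :=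
  gamma_eq_one_and_omega_identification_general f fstar hf hfstar ω ωstar ση σηstar hση hσηstar heq
    γ hγ hcoprime hcoprimestar
end
end
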